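/- If the sequences (a₁,…,a_h) and (b₁,…,b_k) agree in the first j−1 entries and a_j < b_j for some j ≤ min(h,k), where all entries are ≥ 2, then the negative continued fraction [a₁,…,a_h] is strictly less than [b₁,…,b_k]. -/

import Mathlib

/-- Negative continued fraction `[a₁,…,a_h] = a₁ - 1/(a₂ - 1/(⋯ - 1/a_h))`. -/
def ncf : List ℤ → ℚ
  | [] => 0
  | a :: l => (a : ℚ) - (ncf l)⁻¹

lemma ncf_gt_one : ∀ l : List ℤ, (∀ a ∈ l, 2 ≤ a) → l ≠ [] → 1 < ncf l
  | [], _, h => absurd rfl h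
  | a :: t, h, _ => by
    have ha : (2 : ℚ) ≤ (a : ℚ) := by exact_mod_cast h a List.mem_cons_self
    have hinv : (ncf t)⁻¹ < 1 := by
      rcases eq_or_ne t [] with rfl | ht
      · simp [ncf]
      · have h1 : 1 < ncf t := ncf_gt_one t (fun x hx => h x (List.mem_cons_of_mem a hx)) ht
        rw [inv_lt_one_iff₀]; right; exact h1
    show 1 < (a : ℚ) - (ncf t)⁻¹
    linarith

lemma ncf_inv_nonneg (l : List ℤ) (h : ∀ a ∈ l, 2 ≤ a) : 0 ≤ (ncf l)⁻¹ := by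
  rcases eq_or_ne l [] with rfl | hl
  · simp [ncf]
  · have := ncf_gt_one l h hl
    positivity

lemma ncf_inv_lt_one (l : List ℤ) (h : ∀ a ∈ l, 2 ≤ a) : (ncf l)⁻¹ < 1 := by
  rcases eq_or_ne l [] with rfl | hl
  · simp [ncf]
  · rw [inv_lt_one_iff₀]; right; exact ncf_gt_one l h hl

/-- If two sequences of entries `≥ 2` agree in the first `j` entries (zero-based)
    and the next entry of the first is strictly smaller, then the corresponding
    negative continued fractions satisfy a strict inequality. -/
theorem stmt_3 (l₁ l₂ : List ℤ) (ha : ∀ a ∈ l₁, 2 ≤ a) (hb : ∀ b ∈ l₂, 2 ≤ b)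
    (j : ℕ) (hj₁ : j < l₁.length) (hj₂ : j < l₂.length)
    (hpre : l₁.take j = l₂.take j) (hlt : l₁.getD j 0 < l₂.getD j 0) :
    ncf l₁ < ncf l₂ := by
  induction j generalizing l₁ l₂ with
  | zero =>
    rcases l₁ with _ | ⟨a, t₁⟩
    · simp at hj₁
    rcases l₂ with _ | ⟨b, t₂⟩
    · simp at hj₂
    simp only [List.getD_cons_zero] at hlt
    have hab : (a : ℚ) + 1 ≤ (b : ℚ) := by exact_mod_cast hlt
    have h1 : 0 ≤ (ncf t₁)⁻¹ := ncf_inv_nonneg t₁ (fun x hx => ha x (List.mem_cons_of_mem a hx))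
    have h2 : (ncf t₂)⁻¹ < 1 := ncf_inv_lt_one t₂ (fun x hx => hb x (List.mem_cons_of_mem b hx))
    show (a : ℚ) - (ncf t₁)⁻¹ < (b : ℚ) - (ncf t₂)⁻¹
    linarith
  | succ j ih =>
    rcases l₁ with _ | ⟨a, t₁⟩
    · simp at hj₁
    rcases l₂ with _ | ⟨b, t₂⟩
    · simp at hj₂
    simp only [List.take_succ_cons, List.cons.injEq] at hpre
    obtain ⟨rfl, hpre⟩ := hpre
    simp only [List.getD_cons_succ] at hlt
    simp only [List.length_cons, Nat.succ_lt_succ_iff] at hj₁ hj₂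
    have ha' : ∀ x ∈ t₁, 2 ≤ x := fun x hx => ha x (List.mem_cons_of_mem a hx)
    have hb' : ∀ x ∈ t₂, 2 ≤ x := fun x hx => hb x (List.mem_cons_of_mem a hx)
    have h1 : 1 < ncf t₁ := ncf_gt_one t₁ ha' (by rintro rfl; simp at hj₁)
    have h2 : 1 < ncf t₂ := ncf_gt_one t₂ hb' (by rintro rfl; simp at hj₂)
    have hlt' : ncf t₁ < ncf t₂ := ih t₁ t₂ ha' hb' hj₁ hj₂ hpre hlt
    have : (ncf t₂)⁻¹ < (ncf t₁)⁻¹ :=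
      inv_strictAnti₀ (by linarith) hlt'
    show (a : ℚ) - (ncf t₁)⁻¹ < (a : ℚ) - (ncf t₂)⁻¹
    linarith
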